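/- Let G = (V, E, w) be a weighted graph, E_1, ..., E_t subsets of E with union E, with distinct occurrence numbers 1 = c_1 < c_2 < ... < c_k and associated overlapping cardinality partition. If for each i, H_i is an ε-spectral sparsifier of the induced subgraph G_i = (V, E_i, w_i), then the graph H whose Laplacian is L_H = (∑_{i=1}^t L_{H_i})/(c_1 · c_k) satisfies (1-ε') x^T L_G x ≤ x^T L_H x ≤ (1+ε') x^T L_G x for all x ∈ ℝ^V, for any ε' ≥ 1 - (1-ε)/c_k with ε ≤ ε' < 1. -/

import Mathlib

open Matrix Finset

/-- The weighted graph Laplacian of the graph on vertex set `V` with edge set `F`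
and weight function `w`. -/
noncomputable def lap {V : Type*} [Fintype V] [DecidableEq V]
    (F : Finset (Sym2 V)) (w : Sym2 V → ℝ) : Matrix V V ℝ :=
  fun x y =>
    if x = y then ∑ z ∈ Finset.univ.filter (fun z => z ≠ x ∧ s(x, z) ∈ F), w s(x, z)
    else if s(x, y) ∈ F then -w s(x, y) else 0

/-- The occurrence number `#(e)`: the number of indices `i` with `e ∈ 𝓔 i`. -/
def occ {V : Type*} [DecidableEq V] {t : ℕ} (𝓔 : Fin t → Finset (Sym2 V))
    (e : Sym2 V) : ℕ :=
  (Finset.univ.filter (fun i => e ∈ 𝓔 i)).card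

/-!
With `W_F` the weighted adjacency matrix of `(V, F, w)`, one has
`2 xᵀ L_F x = ∑_{a,b} W_F(a,b) (x_a - x_b)²`. Since every `E_i ⊆ E`, summing over `i` counts
each edge `e ∈ E` exactly `#(e)` times, and `1 ≤ #(e) ≤ c_k`. Applying the sparsifier bounds to
each `H_i`, it therefore suffices that `1 - ε' ≤ (1 - ε) #(e) / c_k` and
`(1 + ε) #(e) / c_k ≤ 1 + ε'`. Both sides are affine in `#(e)`, so it is enough to check the
endpoints `#(e) = 1` and `#(e) = c_k`.
-/

theorem two_mul_dotProduct_diagonal_sub_mulVec {n R : Type*} [Fintype n] [DecidableEq n]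
    [CommRing R] {W : Matrix n n R} (hW : W.IsSymm) (x : n → R) :
    2 * (x ⬝ᵥ (diagonal (fun a => ∑ b, W a b) - W) *ᵥ x) =
      ∑ a, ∑ b, W a b * (x a - x b) ^ 2 := by
  have hquad : x ⬝ᵥ (diagonal (fun a => ∑ b, W a b) - W) *ᵥ x
      = ∑ a, ∑ b, W a b * x a ^ 2 - ∑ a, ∑ b, x a * (W a b * x b) := by
    simp only [dotProduct, mulVec, Matrix.sub_apply, diagonal_apply, sub_mul, mul_sub,
      sum_sub_distrib, ite_mul, zero_mul, sum_ite_eq, mem_univ, if_true, mul_sum, sum_mul]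
    congr 1
    exact sum_congr rfl fun a _ => sum_congr rfl fun b _ => by ring
  have hswap : ∑ a, ∑ b, W a b * x b ^ 2 = ∑ a, ∑ b, W a b * x a ^ 2 := by
    rw [sum_comm]
    exact sum_congr rfl fun a _ => sum_congr rfl fun b _ => by rw [hW.apply b a]
  have hexp : ∀ a b, W a b * (x a - x b) ^ 2
      = 2 * W a b * x a ^ 2 - 2 * (x a * (W a b * x b)) - W a b * x a ^ 2 + W a b * x b ^ 2 := by
    intros; ring
  simp only [hexp, sum_add_distrib, sum_sub_distrib, hswap, sub_add_cancel, mul_assoc, ← mul_sum,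
    hquad, mul_sub]

section Laplacian

variable {V : Type*} [DecidableEq V]

noncomputable def weightedAdjMatrix (F : Finset (Sym2 V)) (w : Sym2 V → ℝ) : Matrix V V ℝ :=
  fun a b => if a ≠ b ∧ s(a, b) ∈ F then w s(a, b) else 0

theorem weightedAdjMatrix_isSymm (F : Finset (Sym2 V)) (w : Sym2 V → ℝ) :
    (weightedAdjMatrix F w).IsSymm := by
  ext a b
  simp only [transpose_apply, weightedAdjMatrix, ne_comm, Sym2.eq_swap]

variable {t : ℕ} {E : Finset (Sym2 V)} {𝓔 : Fin t → Finset (Sym2 V)} {w : Sym2 V → ℝ}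

theorem sum_weightedAdjMatrix_apply (hsub : ∀ i, 𝓔 i ⊆ E) (a b : V) :
    ∑ i, weightedAdjMatrix (𝓔 i) w a b = occ 𝓔 s(a, b) * weightedAdjMatrix E w a b := by
  by_cases hab : a ≠ b ∧ s(a, b) ∈ E
  · simp [weightedAdjMatrix, hab, occ, ← sum_filter]
  · have hi : ∀ i, ¬ (a ≠ b ∧ s(a, b) ∈ 𝓔 i) := fun i h => hab ⟨h.1, hsub i h.2⟩
    simp [weightedAdjMatrix, hi, hab]

variable [Fintype V]

theorem lap_eq_diagonal_sub_weightedAdjMatrix (F : Finset (Sym2 V)) (w : Sym2 V → ℝ) :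
    lap F w = diagonal (fun a => ∑ b, weightedAdjMatrix F w a b) - weightedAdjMatrix F w := by
  ext a b
  by_cases hab : a = b
  · subst hab
    simp [lap, weightedAdjMatrix, sum_filter, ne_comm]
  · simp only [lap, weightedAdjMatrix, Matrix.sub_apply, diagonal_apply_ne _ hab, ne_eq, hab,
      not_false_eq_true, true_and, zero_sub, if_false]
    rw [apply_ite Neg.neg, neg_zero]

theorem two_mul_dotProduct_lap_mulVec (F : Finset (Sym2 V)) (w : Sym2 V → ℝ) (x : V → ℝ) :
    2 * (x ⬝ᵥ lap F w *ᵥ x) = ∑ a, ∑ b, weightedAdjMatrix F w a b * (x a - x b) ^ 2 := by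
  rw [lap_eq_diagonal_sub_weightedAdjMatrix,
    two_mul_dotProduct_diagonal_sub_mulVec (weightedAdjMatrix_isSymm F w)]

theorem two_mul_sum_dotProduct_lap_mulVec (hsub : ∀ i, 𝓔 i ⊆ E) (x : V → ℝ) :
    2 * ∑ i, x ⬝ᵥ lap (𝓔 i) w *ᵥ x =
      ∑ a, ∑ b, occ 𝓔 s(a, b) * (weightedAdjMatrix E w a b * (x a - x b) ^ 2) := by
  simp only [mul_sum, two_mul_dotProduct_lap_mulVec]
  rw [sum_comm]
  refine sum_congr rfl fun a _ => ?_
  rw [sum_comm]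
  refine sum_congr rfl fun b _ => ?_
  rw [← sum_mul, sum_weightedAdjMatrix_apply hsub, mul_assoc]

theorem mul_dotProduct_lap_mulVec_le_mul_sum (hsub : ∀ i, 𝓔 i ⊆ E) (hw : ∀ e, 0 ≤ w e)
    {α β : ℝ} (hαβ : ∀ e ∈ E, α ≤ β * occ 𝓔 e) (x : V → ℝ) :
    α * (x ⬝ᵥ lap E w *ᵥ x) ≤ β * ∑ i, x ⬝ᵥ lap (𝓔 i) w *ᵥ x := by
  suffices α * (2 * (x ⬝ᵥ lap E w *ᵥ x)) ≤ β * (2 * ∑ i, x ⬝ᵥ lap (𝓔 i) w *ᵥ x) by linarith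
  rw [two_mul_dotProduct_lap_mulVec, two_mul_sum_dotProduct_lap_mulVec hsub, mul_sum, mul_sum]
  refine sum_le_sum fun a _ => ?_
  rw [mul_sum, mul_sum]
  refine sum_le_sum fun b _ => ?_
  by_cases hab : a ≠ b ∧ s(a, b) ∈ E
  · have hterm : 0 ≤ w s(a, b) * (x a - x b) ^ 2 := mul_nonneg (hw _) (sq_nonneg _)
    simp only [weightedAdjMatrix, if_pos hab]
    rw [← mul_assoc β]
    exact mul_le_mul_of_nonneg_right (hαβ _ hab.2) hterm
  · simp [weightedAdjMatrix, hab]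

theorem mul_sum_dotProduct_lap_mulVec_le_mul (hsub : ∀ i, 𝓔 i ⊆ E) (hw : ∀ e, 0 ≤ w e)
    {α β : ℝ} (hαβ : ∀ e ∈ E, β * occ 𝓔 e ≤ α) (x : V → ℝ) :
    β * ∑ i, x ⬝ᵥ lap (𝓔 i) w *ᵥ x ≤ α * (x ⬝ᵥ lap E w *ᵥ x) := by
  have := mul_dotProduct_lap_mulVec_le_mul_sum hsub hw (α := -α) (β := -β)
    (fun e he => by linarith [hαβ e he]) x
  linarith

end Laplacian

theorem one_sub_le_inv_mul_mul {C m ε ε' : ℝ} (hm1 : 1 ≤ m) (hmC : m ≤ C)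
    (hε' : 1 - (1 - ε) / C ≤ ε') (hεε' : ε ≤ ε') : 1 - ε' ≤ C⁻¹ * (1 - ε) * m := by
  have hC : 0 < C := by linarith
  rw [inv_mul_eq_div, div_mul_eq_mul_div, le_div_iff₀ hC]
  rw [sub_le_iff_le_add, ← sub_le_iff_le_add', le_div_iff₀ hC] at hε'
  rcases le_total 0 (1 - ε) with hpos | hneg
  · nlinarith
  · nlinarith

theorem inv_mul_mul_le_one_add {C m ε ε' : ℝ} (hm1 : 1 ≤ m) (hmC : m ≤ C)
    (hε' : 1 - (1 - ε) / C ≤ ε') (hεε' : ε ≤ ε') : C⁻¹ * (1 + ε) * m ≤ 1 + ε' := by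
  have hC : 0 < C := by linarith
  rw [inv_mul_eq_div, div_mul_eq_mul_div, div_le_iff₀ hC]
  rw [sub_le_iff_le_add, ← sub_le_iff_le_add', le_div_iff₀ hC] at hε'
  rcases le_total 0 (1 + ε) with hpos | hneg
  · nlinarith
  · nlinarith

theorem union_of_sparsifiers_general
    {V : Type*} [Fintype V] [DecidableEq V] {t k : ℕ}
    (E : Finset (Sym2 V)) (w : Sym2 V → ℝ) (hw : ∀ e, 0 < w e)
    (𝓔 : Fin t → Finset (Sym2 V))
    (hsub : ∀ i, 𝓔 i ⊆ E)
    (c : Fin (k + 1) → ℕ) (hc : StrictMono c) (hc1 : c 0 = 1)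
    (hcov : ∀ e ∈ E, ∃ j, occ 𝓔 e = c j)
    (ε ε' : ℝ)
    (LH : Fin t → Matrix V V ℝ)
    (hH : ∀ i, ∀ x : V → ℝ,
      (1 - ε) * (x ⬝ᵥ (lap (𝓔 i) w).mulVec x) ≤ x ⬝ᵥ (LH i).mulVec x ∧
      x ⬝ᵥ (LH i).mulVec x ≤ (1 + ε) * (x ⬝ᵥ (lap (𝓔 i) w).mulVec x))
    (hε' : 1 - (1 - ε) / (c (Fin.last k) : ℝ) ≤ ε')
    (hεε' : ε ≤ ε') :
    ∀ x : V → ℝ,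
      (1 - ε') * (x ⬝ᵥ (lap E w).mulVec x) ≤
        x ⬝ᵥ ((((c 0 : ℝ) * (c (Fin.last k) : ℝ))⁻¹ • ∑ i, LH i).mulVec x) ∧
      x ⬝ᵥ ((((c 0 : ℝ) * (c (Fin.last k) : ℝ))⁻¹ • ∑ i, LH i).mulVec x) ≤
        (1 + ε') * (x ⬝ᵥ (lap E w).mulVec x) := by
  intro x
  set C : ℝ := (c (Fin.last k) : ℝ)
  have hocc : ∀ e ∈ E, 1 ≤ (occ 𝓔 e : ℝ) ∧ (occ 𝓔 e : ℝ) ≤ C := by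
    intro e he
    obtain ⟨j, hj⟩ := hcov e he
    rw [hj]
    exact ⟨Nat.one_le_cast.mpr (hc1 ▸ hc.monotone (Fin.zero_le j)),
      Nat.cast_le.mpr (hc.monotone (Fin.le_last j))⟩
  have hw' : ∀ e, 0 ≤ w e := fun e => (hw e).le
  have hlow := mul_dotProduct_lap_mulVec_le_mul_sum hsub hw'
    (fun e he => one_sub_le_inv_mul_mul (hocc e he).1 (hocc e he).2 hε' hεε') x
  have hup := mul_sum_dotProduct_lap_mulVec_le_mul hsub hw'
    (fun e he => inv_mul_mul_le_one_add (hocc e he).1 (hocc e he).2 hε' hεε') x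
  have hCinv : 0 ≤ C⁻¹ := by positivity
  rw [hc1, Nat.cast_one, one_mul, smul_mulVec, dotProduct_smul, sum_mulVec, dotProduct_sum,
    smul_eq_mul]
  constructor
  · calc (1 - ε') * (x ⬝ᵥ lap E w *ᵥ x)
        ≤ C⁻¹ * ∑ i, (1 - ε) * (x ⬝ᵥ lap (𝓔 i) w *ᵥ x) := by rwa [← mul_sum, ← mul_assoc]
      _ ≤ C⁻¹ * ∑ i, x ⬝ᵥ LH i *ᵥ x :=
        mul_le_mul_of_nonneg_left (sum_le_sum fun i _ => (hH i x).1) hCinv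
  · calc C⁻¹ * ∑ i, x ⬝ᵥ LH i *ᵥ x
        ≤ C⁻¹ * ∑ i, (1 + ε) * (x ⬝ᵥ lap (𝓔 i) w *ᵥ x) :=
        mul_le_mul_of_nonneg_left (sum_le_sum fun i _ => (hH i x).2) hCinv
      _ ≤ (1 + ε') * (x ⬝ᵥ lap E w *ᵥ x) := by rwa [← mul_sum, ← mul_assoc]

/-- Theorem 2: the union of ε-spectral sparsifiers (with Laplacian rescaled by
`1/(c_1 c_k)`) is an ε'-spectral sparsifier of `G`, for any
`ε' ≥ 1 - (1-ε)/c_k` with `ε ≤ ε' < 1`. -/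
theorem union_of_sparsifiers
    {V : Type*} [Fintype V] [DecidableEq V] {t k : ℕ}
    (E : Finset (Sym2 V)) (w : Sym2 V → ℝ) (hw : ∀ e, 0 < w e)
    (𝓔 : Fin t → Finset (Sym2 V))
    (hsub : ∀ i, 𝓔 i ⊆ E)
    (hunion : Finset.univ.biUnion 𝓔 = E)
    (c : Fin (k + 1) → ℕ) (hc : StrictMono c) (hc1 : c 0 = 1)
    (hcov : ∀ e ∈ E, ∃ j, occ 𝓔 e = c j)
    (ε ε' : ℝ) (hε0 : 0 ≤ ε)
    (LH : Fin t → Matrix V V ℝ)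
    (hH : ∀ i, ∀ x : V → ℝ,
      (1 - ε) * (x ⬝ᵥ (lap (𝓔 i) w).mulVec x) ≤ x ⬝ᵥ (LH i).mulVec x ∧
      x ⬝ᵥ (LH i).mulVec x ≤ (1 + ε) * (x ⬝ᵥ (lap (𝓔 i) w).mulVec x))
    (hε' : 1 - (1 - ε) / (c (Fin.last k) : ℝ) ≤ ε')
    (hεε' : ε ≤ ε') (hε'1 : ε' < 1) :
    ∀ x : V → ℝ,
      (1 - ε') * (x ⬝ᵥ (lap E w).mulVec x) ≤
        x ⬝ᵥ ((((c 0 : ℝ) * (c (Fin.last k) : ℝ))⁻¹ • ∑ i, LH i).mulVec x) ∧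
      x ⬝ᵥ ((((c 0 : ℝ) * (c (Fin.last k) : ℝ))⁻¹ • ∑ i, LH i).mulVec x) ≤
        (1 + ε') * (x ⬝ᵥ (lap E w).mulVec x) :=
  union_of_sparsifiers_general E w hw 𝓔 hsub c hc hc1 hcov ε ε' LH hH hε' hεε'
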